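/- arXiv:2007.07188 — 6 statements merged into one kernel-verified Lean document; each statement's English description precedes it below -/
import Mathlib

section
/- The contraposition rule (ConCp) is sound for HYPE models: if at every state and assignment, forcing all of Γ implies forcing some formula of ¬Δ, then at every state and assignment, forcing all of Δ implies forcing some formula of ¬Γ. Here ¬Γ denotes the set of negations of members of Γ. -/
structure HModel where
  W : Type
  D : Type
  le : W → W → Prop
  star : W → W
  I : W → ℕ → List D → Prop
  nonemptyW : Nonempty W
  nonemptyD : Nonempty D
  le_refl : ∀ w, le w w
  le_trans : ∀ {a b c}, le a b → le b c → le a c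
  star_anti : ∀ {w v}, le w v → le (star v) (star w)
  star_invol : ∀ w, star (star w) = w
  hered : ∀ {w v} (p : ℕ) (args : List D), le w v → I w p args → I v p args

inductive Fml where
  | atom : ℕ → List ℕ → Fml
  | bot : Fml
  | neg : Fml → Fml
  | or : Fml → Fml → Fml
  | imp : Fml → Fml → Fml
  | all : ℕ → Fml → Fml

def force (M : HModel) : Fml → M.W → (ℕ → M.D) → Prop
  | .atom p args, w, σ => M.I w p (args.map σ)
  | .bot, _, _ => False
  | .neg A, w, σ => ¬ force M A (M.star w) σ
  | .or A B, w, σ => force M A w σ ∨ force M B w σ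
  | .imp A B, w, σ => ∀ v, M.le w v → (force M A v σ → force M B v σ)
  | .all x A, w, σ => ∀ d : M.D, force M A w (Function.update σ x d)

theorem conCp_sound (M : HModel) (Γ Δ : List Fml)
    (h : ∀ (w : M.W) (σ : ℕ → M.D),
      (∀ γ ∈ Γ, force M γ w σ) → ∃ δ ∈ Δ, force M (.neg δ) w σ) :
    ∀ (w : M.W) (σ : ℕ → M.D),
      (∀ δ ∈ Δ, force M δ w σ) → ∃ γ ∈ Γ, force M (.neg γ) w σ := by
  intro w σ hΔ
  by_contra hc
  push_neg at hc
  simp only [force] at hc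
  have hΓ : ∀ γ ∈ Γ, force M γ (M.star w) σ := by
    intro γ hγ
    have := hc γ hγ
    tauto
  obtain ⟨δ, hδ, hnd⟩ := h (M.star w) σ hΓ
  simp only [force, M.star_invol] at hnd
  exact hnd (hΔ δ hδ)
end

section
/- The converse contraposition rule (ClCp) is sound for HYPE models: if the sequent ¬Γ ⇒ Δ is valid in all HYPE models, then the sequent ¬Δ ⇒ Γ is valid in all HYPE models. -/
def Valid (Γ Δ : List Fml) : Prop :=
  ∀ (M : HModel) (w : M.W) (σ : ℕ → M.D),
    (∀ γ ∈ Γ, force M γ w σ) → ∃ δ ∈ Δ, force M δ w σ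

theorem clCp_sound (Γ Δ : List Fml)
    (h : Valid (Γ.map .neg) Δ) : Valid (Δ.map .neg) Γ := by
  intro M w σ hΔ
  by_contra hc
  push_neg at hc
  have := h M (M.star w) σ (by
    intro γ hγ
    simp only [List.mem_map] at hγ
    obtain ⟨g, hg, rfl⟩ := hγ
    show ¬ force M g (M.star (M.star w)) σ
    rw [M.star_invol]
    exact hc g hg)
  obtain ⟨δ, hδ, hf⟩ := this
  have := hΔ (.neg δ) (List.mem_map.2 ⟨δ, hδ, rfl⟩)
  exact this hf
end

section
/- In any constant-domain HYPE model, if every state forces A ∨ ¬A and no state forces both A and ¬A, and likewise for B, then at every state w: w forces A → B if and only if w forces ¬A ∨ B. -/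
lemma force_mono (M : HModel) : ∀ (F : Fml) {w v : M.W} (σ : ℕ → M.D),
    M.le w v → force M F w σ → force M F v σ := by
  intro F
  induction F with
  | atom p args => intro w v σ h hf; exact M.hered p _ h hf
  | bot => intro w v σ h hf; exact hf
  | neg A ih => intro w v σ h hf hv; exact hf (ih σ (M.star_anti h) hv)
  | or A B ihA ihB =>
      intro w v σ h hf
      cases hf with
      | inl hA => exact Or.inl (ihA σ h hA)
      | inr hB => exact Or.inr (ihB σ h hB)
  | imp A B ihA ihB =>
      intro w v σ h hf u hu hA
      exact hf u (M.le_trans h hu) hA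
  | all x A ih =>
      intro w v σ h hf d
      exact ih _ h (hf d)

theorem classical_imp_iff_material (M : HModel) (A B : Fml) (σ : ℕ → M.D)
    (hemA : ∀ v : M.W, force M (.or A (.neg A)) v σ)
    (hconA : ∀ v : M.W, ¬ (force M A v σ ∧ force M (.neg A) v σ))
    (hemB : ∀ v : M.W, force M (.or B (.neg B)) v σ)
    (hconB : ∀ v : M.W, ¬ (force M B v σ ∧ force M (.neg B) v σ)) :
    ∀ w : M.W, force M (.imp A B) w σ ↔ force M (.or (.neg A) B) w σ := by
  intro w
  constructor
  · intro h
    cases hemA w with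
    | inl hA => exact Or.inr (h w (M.le_refl w) hA)
    | inr hnA => exact Or.inl hnA
  · intro h v hv hA
    cases force_mono M (.or (.neg A) B) σ hv h with
    | inl hnA => exact absurd ⟨hA, hnA⟩ (hconA v)
    | inr hB => exact hB
end

section
/- Classical recapture for propositional HYPE semantics: in a constant-domain HYPE model, if every atomic formula P occurring in a quantifier-free formula A satisfies, at every state w, that w forces P iff w* forces P, then at every state w, w forces A ∨ ¬A. -/
/-- Quantifier-free formulas: built from atoms and ⊥ by ¬, ∨, →. -/
def QF : Fml → Prop
  | .atom _ _ => True
  | .bot => True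
  | .neg A => QF A
  | .or A B => QF A ∧ QF B
  | .imp A B => QF A ∧ QF B
  | .all _ _ => False

/-- The atoms (predicate code together with argument list) occurring in a formula. -/
def atomsOf : Fml → Set (ℕ × List ℕ)
  | .atom p args => {(p, args)}
  | .bot => ∅
  | .neg A => atomsOf A
  | .or A B => atomsOf A ∪ atomsOf B
  | .imp A B => atomsOf A ∪ atomsOf B
  | .all _ A => atomsOf A


lemma hered_force (M : HModel) : ∀ (A : Fml) (σ : ℕ → M.D) (w v : M.W),
    M.le w v → force M A w σ → force M A v σ := by
  intro A
  induction A with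
  | atom p args => intro σ w v hwv h; exact M.hered p _ hwv h
  | bot => intro σ w v _ h; exact h
  | neg A ih =>
      intro σ w v hwv h hA
      exact h (ih σ _ _ (M.star_anti hwv) hA)
  | or A B ihA ihB =>
      intro σ w v hwv h
      rcases h with h | h
      · exact Or.inl (ihA σ w v hwv h)
      · exact Or.inr (ihB σ w v hwv h)
  | imp A B ihA ihB =>
      intro σ w v hwv h u hvu hA
      exact h u (M.le_trans hwv hvu) hA
  | all x A ih =>
      intro σ w v hwv h d
      exact ih _ w v hwv (h d)

lemma starinv (M : HModel) (σ : ℕ → M.D) : ∀ (A : Fml), QF A →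
    (∀ p args, (p, args) ∈ atomsOf A → ∀ w : M.W,
      (force M (.atom p args) w σ ↔ force M (.atom p args) (M.star w) σ)) →
    ∀ w : M.W, force M A w σ ↔ force M A (M.star w) σ := by
  intro A
  induction A with
  | atom p args =>
      intro _ hatoms w
      exact hatoms p args rfl w
  | bot => intro _ _ w; exact Iff.rfl
  | neg A ih =>
      intro hqf hatoms w
      have h := ih hqf hatoms (M.star w)
      rw [M.star_invol] at h
      show ¬ force M A (M.star w) σ ↔ ¬ force M A (M.star (M.star w)) σ
      rw [M.star_invol]
      exact not_congr h
  | or A B ihA ihB =>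
      intro hqf hatoms w
      have hA := ihA hqf.1 (fun p args hm => hatoms p args (Or.inl hm)) w
      have hB := ihB hqf.2 (fun p args hm => hatoms p args (Or.inr hm)) w
      exact or_congr hA hB
  | imp A B ihA ihB =>
      intro hqf hatoms w
      have hA := ihA hqf.1 (fun p args hm => hatoms p args (Or.inl hm))
      have hB := ihB hqf.2 (fun p args hm => hatoms p args (Or.inr hm))
      have key : ∀ u : M.W, force M (.imp A B) u σ ↔ (force M A u σ → force M B u σ) := by
        intro u
        constructor
        · intro h hAu; exact h u (M.le_refl u) hAu
        · intro h v huv hAv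
          by_cases hAu : force M A u σ
          · exact hered_force M B σ u v huv (h hAu)
          · exfalso
            apply hAu
            have : force M A (M.star v) σ := (hA v).mp hAv
            have : force M A (M.star u) σ :=
              hered_force M A σ _ _ (M.star_anti huv) this
            exact (hA u).mpr this
      rw [key w, key (M.star w)]
      exact imp_congr (hA w) (hB w)
  | all x A ih =>
      intro hqf _
      exact absurd hqf (by simp [QF])

theorem classical_recapture (M : HModel) (A : Fml) (σ : ℕ → M.D)
    (hqf : QF A)
    (hatoms : ∀ p args, (p, args) ∈ atomsOf A → ∀ w : M.W,
      (force M (.atom p args) w σ ↔ force M (.atom p args) (M.star w) σ)) :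
    ∀ w : M.W, force M (.or A (.neg A)) w σ := by
  intro w
  by_cases h : force M A w σ
  · exact Or.inl h
  · right
    intro hstar
    exact h ((starinv M σ A hqf hatoms w).mpr hstar)
end

section
/- Transfinite induction implies jump-lifted transfinite induction, semantically over the ordinals: for any predicate A on ordinals, define the Gentzen jump A⁺(θ) := ∀ξ, (∀η < ξ, A η) → (∀η < ξ + ω^θ, A η). If A is progressive (∀θ, (∀ζ < θ, A ζ) → A θ), then A⁺ is progressive. -/
open Ordinal

def Prog (B : Ordinal → Prop) : Prop := ∀ θ, (∀ ζ < θ, B ζ) → B θ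

def Jump (A : Ordinal → Prop) (θ : Ordinal) : Prop :=
  ∀ ξ, (∀ η < ξ, A η) → ∀ η < ξ + omega0 ^ θ, A η

/-!
`A⁺(θ)` says that adding `ω^θ` to a segment `[0, ξ)` on which `A` holds keeps `A` valid.
For `θ = 0` this is progressiveness of `A`; for `θ = δ + 1` one adds `ω^δ` a finite number
of times, since every ordinal below `ω^δ · ω` lies below some `ω^δ · n`; for a limit `θ` every
ordinal below `ω^θ` lies below some `ω^δ` with `δ < θ`.
-/

namespace Jump

variable {A : Ordinal → Prop}

theorem zero (hA : Prog A) : Jump A 0 := by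
  intro ξ hξ η hη
  rw [opow_zero, Order.lt_add_one_iff] at hη
  rcases hη.lt_or_eq with hη | rfl
  · exact hξ η hη
  · exact hA η hξ

theorem of_isSuccLimit_add {ξ α : Ordinal} (hα : Order.IsSuccLimit α)
    (h : ∀ β < α, ∀ η < ξ + β, A η) : ∀ η < ξ + α, A η := by
  intro η hη
  obtain ⟨β, hβ, hη⟩ := (lt_add_iff_of_isSuccLimit hα).mp hη
  exact h β hβ η hη

theorem mul_nat {δ : Ordinal} (hδ : Jump A δ) (n : ℕ) :
    ∀ ξ, (∀ η < ξ, A η) → ∀ η < ξ + omega0 ^ δ * n, A η := by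
  intro ξ hξ
  induction n with
  | zero => simpa using hξ
  | succ n ih =>
    rw [Nat.cast_succ, mul_add_one, ← add_assoc]
    exact hδ _ ih

theorem succ {δ : Ordinal} (hδ : Jump A δ) : Jump A (Order.succ δ) := by
  intro ξ hξ
  rw [opow_succ]
  refine of_isSuccLimit_add (isSuccLimit_mul_right (opow_pos δ omega0_pos) isSuccLimit_omega0)
    fun β hβ η hη ↦ ?_
  obtain ⟨c, hc, hβc⟩ := (lt_mul_iff_of_isSuccLimit isSuccLimit_omega0).mp hβ
  obtain ⟨n, rfl⟩ := lt_omega0.mp hc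
  exact mul_nat hδ n ξ hξ η (hη.trans (add_lt_add_right hβc ξ))

theorem of_isSuccLimit {θ : Ordinal} (hθ : Order.IsSuccLimit θ) (h : ∀ δ < θ, Jump A δ) :
    Jump A θ := by
  intro ξ hξ
  refine of_isSuccLimit_add (isSuccLimit_opow_left isSuccLimit_omega0 hθ.ne_bot)
    fun β hβ η hη ↦ ?_
  obtain ⟨δ, hδ, hβδ⟩ := (lt_opow_of_isSuccLimit omega0_ne_zero hθ).mp hβ
  exact h δ hδ ξ hξ η (hη.trans (add_lt_add_right hβδ ξ))

end Jump

theorem prog_jump (A : Ordinal → Prop) (h : Prog A) : Prog (Jump A) := by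
  intro θ ih
  rcases zero_or_succ_or_isSuccLimit θ with rfl | ⟨δ, rfl⟩ | hθ
  · exact Jump.zero h
  · exact (ih δ (Order.lt_succ δ)).succ
  · exact Jump.of_isSuccLimit hθ ih
end

section
/- If transfinite induction up to α holds for the Gentzen jump of A, and A is progressive, then transfinite induction up to ω^α holds for A: i.e., if Prog(A) and (Prog(A⁺) → ∀ξ < α, A⁺(ξ)) and moreover A⁺ is progressive whenever A is, then ∀η < ω^α, A(η). -/
open Ordinal

/-- At `ξ = 0` the hypothesis of the jump is vacuous. -/
theorem Jump.forall_lt_omega0_opow {A : Ordinal → Prop} {θ : Ordinal} (h : Jump A θ) :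
    ∀ η < omega0 ^ θ, A η := by
  simpa using h 0 (by simp)

theorem ti_lift (A : Ordinal → Prop) (α : Ordinal)
    (hA : Prog A)
    (hTI : Prog (Jump A) → ∀ ξ < α, Jump A ξ)
    (hJ : Prog A → Prog (Jump A)) :
    ∀ η < omega0 ^ α, A η := by
  have hProgJump : Prog (Jump A) := hJ hA
  have hJumpα : Jump A α := hProgJump α (hTI hProgJump)
  exact hJumpα.forall_lt_omega0_opow
end
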